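/- Let L be a first-order language, M a nonempty L-structure, α and β finite types, and φ an L-formula in the free variables α ⊕ β. Let A be the family of functions f_a : (β → M) → ℝ, for a : α → M, defined by f_a(b) = 1 if φ(a,b) holds and f_a(b) = 0 otherwise. Assume φ satisfies the double limit condition in M: for all sequences a : ℕ → (α → M) and b : ℕ → (β → M), writing χ(m,n) = 1 if φ(a m, b n) holds and 0 otherwise, whenever both iterated limits lim_n lim_m χ(m,n) and lim_m lim_n χ(m,n) exist, they are equal. Then for every function g : (β → M) → ℝ lying in the closure of A in the product topology on ℝ^(β → M), there exists a subset s of (β → M) that is definable in the structure M with parameters from M such that g is the indicator function of s (g(b) = 1 if b ∈ s and g(b) = 0 otherwise). -/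

import Mathlib

/-!
A function `g` in the closure of the instances `φ(a, -)` is `{0,1}`-valued and agrees on every
finite set with some instance, so `g = 1_s` with `s` finitely approximated by instances. If
finitely many instances separate every point of `s` from every point outside `s`, then `s` is a
Boolean combination of them, hence definable. Otherwise finite approximation produces `a m`,
`c n ∈ s`, `d n ∉ s` such that `φ(a m, -)` separates `c n` from `d n` exactly when `n < m`. After
passing to subsequences along which the inner limits exist (compactness of Cantor space), the
iterated limits are `1` and `w` for `(a, c)` but `0` and `w` for `(a, d)`, where `w` is the common
inner limit: the double limit condition fails for one of them.
-/

open Filter Topology FirstOrder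

theorem exists_strictMono_forall_eventually_eq (u : ℕ → ℕ → Bool) :
    ∃ I : ℕ → ℕ, StrictMono I ∧ ∃ v : ℕ → Bool, ∀ m, ∀ᶠ n in atTop, u (I n) m = v m := by
  obtain ⟨v, I, hI, hlim⟩ := SeqCompactSpace.tendsto_subseq u
  refine ⟨I, hI, v, fun m => ?_⟩
  simpa [nhds_discrete] using tendsto_pi_nhds.mp hlim m

theorem exists_strictMono_forall_eq (v : ℕ → Bool) :
    ∃ J : ℕ → ℕ, StrictMono J ∧ ∃ w, ∀ m, v (J m) = w := by
  obtain ⟨w, hw⟩ : ∃ w, ∃ᶠ m in atTop, v m = w := by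
    obtain h | h := frequently_or_distrib.mp <|
      Frequently.of_forall (f := atTop) fun m => Bool.eq_false_or_eq_true (v m)
    exacts [⟨_, h⟩, ⟨_, h⟩]
  obtain ⟨J, hJ, hJw⟩ := extraction_of_frequently_atTop hw
  exact ⟨J, hJ, w, hJw⟩

theorem exists_eqOn_of_mem_closure_of_finite_values {Y Z : Type*} [TopologicalSpace Z] [T1Space Z]
    {S : Set Z} (hS : S.Finite) {A : Set (Y → Z)} (hA : ∀ f ∈ A, ∀ y, f y ∈ S) {g : Y → Z}
    (hg : g ∈ closure A) (F : Finset Y) : ∃ f ∈ A, Set.EqOn f g F := by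
  let restrict : (Y → Z) → (F → Z) := fun f y => f y
  have hfin : (restrict '' A).Finite :=
    (Set.Finite.pi (t := fun _ : F => S) fun _ => hS).subset <| by
      rintro _ ⟨f, hf, rfl⟩ y -
      exact hA f hf y
  obtain ⟨f, hf, hfg⟩ : restrict g ∈ restrict '' A := by
    rw [← hfin.isClosed.closure_eq]
    exact image_closure_subset_closure_image (by fun_prop) ⟨g, hg, rfl⟩
  exact ⟨f, hf, fun y hy => congr_fun hfg ⟨y, hy⟩⟩

section Relation

variable {X Y : Type*} {R : X → Y → Prop}

variable (R) in
open Classical in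
def DoubleLimitCondition : Prop :=
  ∀ (a : ℕ → X) (b : ℕ → Y) (c d : ℕ → ℝ) (r s : ℝ),
    (∀ n, Tendsto (fun m => if R (a m) (b n) then (1 : ℝ) else 0) atTop (𝓝 (c n))) →
    Tendsto c atTop (𝓝 r) →
    (∀ m, Tendsto (fun n => if R (a m) (b n) then (1 : ℝ) else 0) atTop (𝓝 (d m))) →
    Tendsto d atTop (𝓝 s) → r = s

theorem DoubleLimitCondition.iff_of_eventually_iff (hR : DoubleLimitCondition R)
    {a : ℕ → X} {b : ℕ → Y} {p q : Prop}
    (hp : ∀ n, ∀ᶠ m in atTop, R (a m) (b n) ↔ p) (hq : ∀ m, ∀ᶠ n in atTop, R (a m) (b n) ↔ q) :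
    p ↔ q := by
  classical
  have hlim : ∀ {p : Prop} {f : ℕ → Prop}, (∀ᶠ k in atTop, f k ↔ p) →
      Tendsto (fun k => if f k then (1 : ℝ) else 0) atTop (𝓝 (if p then 1 else 0)) :=
    fun h => tendsto_const_nhds.congr' <| h.mono fun k hk => by simp only [hk]
  have := hR a b _ _ _ _ (fun n => hlim (hp n)) tendsto_const_nhds (fun m => hlim (hq m))
    tendsto_const_nhds
  by_cases p <;> by_cases q <;> simp_all

theorem DoubleLimitCondition.false_of_ladder (hR : DoubleLimitCondition R) {a : ℕ → X} {c d : ℕ → Y}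
    (hle : ∀ m n, m ≤ n → (R (a m) (c n) ↔ R (a m) (d n)))
    (hlt : ∀ n m, n < m → R (a m) (c n) ∧ ¬ R (a m) (d n)) : False := by
  classical
  obtain ⟨I, hI, v, hv⟩ := exists_strictMono_forall_eventually_eq fun n m => decide (R (a m) (c n))
  obtain ⟨J, hJ, w, hJw⟩ := exists_strictMono_forall_eq v
  have hc_inner : ∀ m, ∀ᶠ n in atTop, R (a (J m)) (c (I n)) ↔ w := fun m =>
    (hv (J m)).mono fun n hn => by rw [← hJw m, ← hn, decide_eq_true_iff]
  have hd_inner : ∀ m, ∀ᶠ n in atTop, R (a (J m)) (d (I n)) ↔ w := fun m =>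
    ((hc_inner m).and (hI.tendsto_atTop.eventually_ge_atTop (J m))).mono
      fun n hn => (hle _ _ hn.2).symm.trans hn.1
  have hc_outer : ∀ n, ∀ᶠ m in atTop, R (a (J m)) (c (I n)) ↔ True := fun n =>
    (hJ.tendsto_atTop.eventually_gt_atTop (I n)).mono fun m hm => iff_true_intro (hlt _ _ hm).1
  have hd_outer : ∀ n, ∀ᶠ m in atTop, R (a (J m)) (d (I n)) ↔ False := fun n =>
    (hJ.tendsto_atTop.eventually_gt_atTop (I n)).mono fun m hm => iff_false_intro (hlt _ _ hm).2
  exact (hR.iff_of_eventually_iff hd_outer hd_inner).mpr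
    ((hR.iff_of_eventually_iff hc_outer hc_inner).mp trivial)

open Classical in
theorem exists_indicator_of_mem_closure {g : Y → ℝ}
    (hg : g ∈ closure {f : Y → ℝ | ∃ x, f = fun y => if R x y then (1 : ℝ) else 0}) :
    ∃ s : Set Y, g = s.indicator 1 ∧ ∀ F : Finset Y, ∃ x, ∀ y ∈ F, (R x y ↔ y ∈ s) := by
  have happrox := exists_eqOn_of_mem_closure_of_finite_values (S := {0, 1}) (by simp)
    (by rintro _ ⟨x, rfl⟩ y; by_cases h : R x y <;> simp [h]) hg
  have h01 : ∀ y, g y = 0 ∨ g y = 1 := fun y => by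
    obtain ⟨_, ⟨x, rfl⟩, hx⟩ := happrox {y}
    rw [← hx (Finset.mem_singleton_self y)]
    by_cases h : R x y <;> simp [h]
  refine ⟨{y | g y = 1}, funext fun y => ?_, fun F => ?_⟩
  · rcases h01 y with h | h <;> simp [h]
  · obtain ⟨_, ⟨x, rfl⟩, hx⟩ := happrox F
    refine ⟨x, fun y hy => ?_⟩
    have hxy : (if R x y then (1 : ℝ) else 0) = g y := hx hy
    by_cases h : R x y <;> simp [h, ← hxy]

theorem exists_ladder_of_not_separated {s : Set Y}
    (happrox : ∀ F : Finset Y, ∃ x, ∀ y ∈ F, (R x y ↔ y ∈ s))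
    (hnsep : ∀ E : Finset X, ∃ y ∈ s, ∃ y' ∉ s, ∀ x ∈ E, (R x y ↔ R x y')) :
    ∃ (a : ℕ → X) (c d : ℕ → Y), (∀ m n, m ≤ n → (R (a m) (c n) ↔ R (a m) (d n))) ∧
      ∀ n m, n < m → R (a m) (c n) ∧ ¬ R (a m) (d n) := by
  classical
  obtain ⟨t, hP, hr⟩ := exists_seq_of_forall_finset_exists
    (fun t : X × Y × Y => t.2.1 ∈ s ∧ t.2.2 ∉ s ∧ (R t.1 t.2.1 ↔ R t.1 t.2.2))
    (fun t t' => (R t'.1 t.2.1 ∧ ¬ R t'.1 t.2.2) ∧ (R t.1 t'.2.1 ↔ R t.1 t'.2.2))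
    (by
      intro F hF
      obtain ⟨x, hx⟩ := happrox (F.image (·.2.1) ∪ F.image (·.2.2))
      obtain ⟨y, hy, y', hy', hyy'⟩ := hnsep (insert x (F.image Prod.fst))
      refine ⟨(x, y, y'), ⟨hy, hy', hyy' x (Finset.mem_insert_self _ _)⟩,
        fun t ht => ⟨⟨?_, ?_⟩, ?_⟩⟩
      · exact (hx _ (Finset.mem_union_left _ (Finset.mem_image_of_mem _ ht))).mpr (hF t ht).1
      · exact fun h => (hF t ht).2.1
          ((hx _ (Finset.mem_union_right _ (Finset.mem_image_of_mem _ ht))).mp h)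
      · exact hyy' _ (Finset.mem_insert_of_mem (Finset.mem_image_of_mem _ ht)))
  refine ⟨fun n => (t n).1, fun n => (t n).2.1, fun n => (t n).2.2, fun m n hmn => ?_,
    fun n m hnm => (hr n m hnm).1⟩
  rcases hmn.eq_or_lt with rfl | hlt
  exacts [(hP m).2.2, (hr m n hlt).2]

theorem DoubleLimitCondition.exists_finset_separating (hR : DoubleLimitCondition R) {s : Set Y}
    (happrox : ∀ F : Finset Y, ∃ x, ∀ y ∈ F, (R x y ↔ y ∈ s)) :
    ∃ E : Finset X, ∀ y ∈ s, ∀ y' ∉ s, ∃ x ∈ E, ¬(R x y ↔ R x y') := by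
  by_contra! hnsep
  obtain ⟨a, c, d, hle, hlt⟩ := exists_ladder_of_not_separated happrox hnsep
  exact hR.false_of_ladder hle hlt

end Relation

theorem Set.definable_setOf_realize_sum_elim {L : Language} {M : Type*} [L.Structure M]
    {A : Set M} {α β : Type*} (φ : L.Formula (α ⊕ β)) {a : α → M} (ha : ∀ i, a i ∈ A) :
    A.Definable L {b | φ.Realize (Sum.elim a b)} := by
  rw [Set.definable_iff_exists_formula_sum]
  refine ⟨φ.relabel (Sum.map (fun i => ⟨a i, ha i⟩) id), ?_⟩
  ext b
  simp only [Language.Formula.realize_relabel, Sum.elim_comp_map]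
  rfl

theorem Set.definable_of_finset_separating {L : Language} {M : Type*} [L.Structure M]
    {A : Set M} {β X : Type*} {R : X → (β → M) → Prop} (hR : ∀ x, A.Definable L {b | R x b})
    {s : Set (β → M)} (E : Finset X) (hE : ∀ b ∈ s, ∀ b' ∉ s, ∃ x ∈ E, ¬(R x b ↔ R x b')) :
    A.Definable L s := by
  let profile (b : β → M) : E → Prop := fun x => R x b
  have hfiber (p : E → Prop) : A.Definable L (profile ⁻¹' {p}) := by
    have : profile ⁻¹' {p} = ⋂ x : E, {b | R x b ↔ p x} := by
      ext b
      simp [profile, funext_iff]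
    rw [this]
    refine definable_iInter_of_finite fun x => ?_
    by_cases hx : p x
    · simpa [hx] using hR x
    · simpa [hx, Set.compl_ofPred] using (hR x).compl
  have hs : s = ⋃ p : profile '' s, profile ⁻¹' {p.1} := by
    ext b
    simp only [Set.mem_iUnion, Set.mem_preimage, Set.mem_singleton_iff, Subtype.exists,
      Set.mem_image, exists_prop]
    refine ⟨fun hb => ⟨_, ⟨b, hb, rfl⟩, rfl⟩, ?_⟩
    rintro ⟨_, ⟨b₀, hb₀, rfl⟩, hprofile⟩
    by_contra hb
    obtain ⟨x, hx, hne⟩ := hE b₀ hb₀ b hb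
    exact hne (iff_of_eq (congr_fun hprofile ⟨x, hx⟩).symm)
  rw [hs]
  exact definable_iUnion_of_finite fun p => hfiber p.1

open Classical in
theorem definable_of_double_limit_condition_general {L : Language} {M : Type*} [L.Structure M]
    {α β : Type*}
    (φ : L.Formula (α ⊕ β))
    (hdl : ∀ (a : ℕ → α → M) (b : ℕ → β → M) (c d : ℕ → ℝ) (r s : ℝ),
        (∀ n, Tendsto
          (fun m => if φ.Realize (Sum.elim (a m) (b n)) then (1 : ℝ) else 0)
          atTop (𝓝 (c n))) →
        Tendsto c atTop (𝓝 r) →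
        (∀ m, Tendsto
          (fun n => if φ.Realize (Sum.elim (a m) (b n)) then (1 : ℝ) else 0)
          atTop (𝓝 (d m))) →
        Tendsto d atTop (𝓝 s) →
        r = s) :
    ∀ g ∈ closure
        { f : (β → M) → ℝ | ∃ a : α → M,
            f = fun b => if φ.Realize (Sum.elim a b) then (1 : ℝ) else 0 },
      ∃ s : Set (β → M),
        (Set.univ : Set M).Definable L s ∧
        g = s.indicator 1 := by
  intro g hg
  obtain ⟨s, rfl, happrox⟩ := exists_indicator_of_mem_closure hg
  have hR : DoubleLimitCondition fun (a : α → M) b => φ.Realize (Sum.elim a b) := hdl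
  obtain ⟨E, hE⟩ := hR.exists_finset_separating happrox
  refine ⟨s, Set.definable_of_finset_separating (fun a => ?_) E hE, rfl⟩
  exact Set.definable_setOf_realize_sum_elim φ fun _ => Set.mem_univ _

open Classical in
/-- Local fundamental theorem of stability via Grothendieck: if a formula `φ` satisfies
the double limit condition in a structure `M`, then every function in the pointwise
closure of the family of indicator functions of instances `φ(a, -)` is the indicator
function of a subset of `β → M` definable in `M` with parameters. -/
theorem definable_of_double_limit_condition {L : Language} {M : Type*} [L.Structure M]
    [Nonempty M] {α β : Type*} [Finite α] [Finite β]
    (φ : L.Formula (α ⊕ β))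
    (hdl : ∀ (a : ℕ → α → M) (b : ℕ → β → M) (c d : ℕ → ℝ) (r s : ℝ),
        (∀ n, Tendsto
          (fun m => if φ.Realize (Sum.elim (a m) (b n)) then (1 : ℝ) else 0)
          atTop (𝓝 (c n))) →
        Tendsto c atTop (𝓝 r) →
        (∀ m, Tendsto
          (fun n => if φ.Realize (Sum.elim (a m) (b n)) then (1 : ℝ) else 0)
          atTop (𝓝 (d m))) →
        Tendsto d atTop (𝓝 s) →
        r = s) :
    ∀ g ∈ closure
        { f : (β → M) → ℝ | ∃ a : α → M,
            f = fun b => if φ.Realize (Sum.elim a b) then (1 : ℝ) else 0 },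
      ∃ s : Set (β → M),
        (Set.univ : Set M).Definable L s ∧
        g = s.indicator 1 :=
  definable_of_double_limit_condition_general φ hdl
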